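/- arXiv:2004.06969 — 7 statements merged into one kernel-verified Lean document; each statement's English description precedes it below -/
import Mathlib

section
/- If (e, f) is a predictable write-write race pair for a trace T (i.e., there is a correctly reordered prefix of T in which e appears immediately before f), then (f, e) is also a predictable write-write race pair for T. -/
inductive Op : Type
  | read (x : ℕ)
  | write (x : ℕ)
  | acquire (y : ℕ)
  | release (y : ℕ)
  deriving DecidableEq

structure Event : Type where
  tid : ℕ
  uid : ℕ
  op : Op
  deriving DecidableEq

def Event.isWrite (e : Event) : Prop := ∃ x, e.op = Op.write x

def Event.isRead (e : Event) : Prop := ∃ x, e.op = Op.read x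

def Event.accesses (e : Event) (x : ℕ) : Prop :=
  e.op = Op.read x ∨ e.op = Op.write x

/-- Position of an event in a trace (trace position). -/
def tracePos (T : List Event) (e : Event) : ℕ := List.idxOf e T

/-- Two events conflict: same variable, different threads, at least one write. -/
def Conflict (e f : Event) : Prop :=
  e.tid ≠ f.tid ∧ ∃ x, e.accesses x ∧ f.accesses x ∧ (e.isWrite ∨ f.isWrite)

/-- `w` is the last write (on some variable `x`) seen by the read `r` in `T`. -/
def LastWriteOf (T : List Event) (w r : Event) : Prop :=
  w ∈ T ∧ r ∈ T ∧ ∃ x, w.op = Op.write x ∧ r.op = Op.read x ∧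
    tracePos T w < tracePos T r ∧
    ∀ w' ∈ T, w'.op = Op.write x → tracePos T w' < tracePos T r →
      tracePos T w' ≤ tracePos T w

/-- `a`, `r` form a matching acquire/release pair on lock `y` (a critical section). -/
def IsCS (T : List Event) (y : ℕ) (a r : Event) : Prop :=
  a ∈ T ∧ r ∈ T ∧ a.op = Op.acquire y ∧ r.op = Op.release y ∧ a.tid = r.tid ∧
    tracePos T a < tracePos T r ∧
    ∀ e ∈ T, (e.op = Op.acquire y ∨ e.op = Op.release y) →
      ¬ (tracePos T a < tracePos T e ∧ tracePos T e < tracePos T r)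

/-- Event `e` belongs to the critical section on lock `y` given by `a`, `r`. -/
def InCS (T : List Event) (y : ℕ) (a r e : Event) : Prop :=
  IsCS T y a r ∧ e ∈ T ∧ e.tid = a.tid ∧
    tracePos T a ≤ tracePos T e ∧ tracePos T e ≤ tracePos T r

/-- The lockset of an event: the locks of all critical sections containing it. -/
def Lockset (T : List Event) (e : Event) : Set ℕ := {y | ∃ a r, InCS T y a r e}

/-- Well-formedness of a trace: events are distinct, every release has a matching
acquire, and two acquires on the same lock are separated by a release. -/
def WellFormed (T : List Event) : Prop :=
  T.Nodup ∧
  (∀ r ∈ T, ∀ y, r.op = Op.release y → ∃ a, IsCS T y a r) ∧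
  (∀ a₁ ∈ T, ∀ a₂ ∈ T, ∀ y, a₁.op = Op.acquire y → a₂.op = Op.acquire y →
    tracePos T a₁ < tracePos T a₂ →
    ∃ rl ∈ T, rl.op = Op.release y ∧ rl.tid = a₁.tid ∧
      tracePos T a₁ < tracePos T rl ∧ tracePos T rl < tracePos T a₂)

/-- `T'` is a correctly reordered prefix of `T`. -/
structure CorrectlyReorderedPrefix (T T' : List Event) : Prop where
  nodup : T'.Nodup
  sub : ∀ e ∈ T', e ∈ T
  programOrder : ∀ i : ℕ,
    (T'.filter (fun e => e.tid = i)) <+: (T.filter (fun e => e.tid = i))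
  lastWriter : ∀ r ∈ T', ∀ w, LastWriteOf T w r → w ∈ T' ∧ LastWriteOf T' w r
  lockSemantics : ∀ a₁ ∈ T', ∀ a₂ ∈ T', ∀ y,
    a₁.op = Op.acquire y → a₂.op = Op.acquire y → tracePos T' a₁ < tracePos T' a₂ →
    ∃ rl ∈ T', rl.op = Op.release y ∧ rl.tid = a₁.tid ∧
      tracePos T' a₁ < tracePos T' rl ∧ tracePos T' rl < tracePos T' a₂

/-- `(e, f)` is a predictable race pair: `e` and `f` conflict and some correctly
reordered prefix of `T` has `e` immediately before `f`. -/
def RacePair (T : List Event) (e f : Event) : Prop :=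
  Conflict e f ∧
  ∃ T', CorrectlyReorderedPrefix T T' ∧ ∃ l₁ l₂, T' = l₁ ++ e :: f :: l₂

/-- If `(e, f)` is a predictable write-write race pair for `T`,
then so is `(f, e)`. -/
theorem stmt0 (T : List Event) (e f : Event)
    (hT : WellFormed T) (he : e.isWrite) (hf : f.isWrite)
    (h : RacePair T e f) : RacePair T f e := by
  obtain ⟨⟨htid, x, hex, hfx, _⟩, T', hcrp, l₁, l₂, hT'⟩ := h
  obtain ⟨xe, hxe⟩ := he
  obtain ⟨xf, hxf⟩ := hf
  have hef : e ≠ f := fun hh => htid (by rw [hh])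
  subst hT'
  -- nodup facts
  have hnd := hcrp.nodup
  rw [List.nodup_append] at hnd
  obtain ⟨hnd1, hnd2, hdisj⟩ := hnd
  have henl : e ∉ l₁ := fun hh => hdisj _ hh _ (by simp) rfl
  have hfnl : f ∉ l₁ := fun hh => hdisj _ hh _ (by simp) rfl
  -- positions in T'
  have posmem : ∀ a ∈ l₁, tracePos (l₁ ++ e :: f :: l₂) a = List.idxOf a l₁ := by
    intro a ha
    exact List.idxOf_append_of_mem ha
  have posmem' : ∀ a ∈ l₁, tracePos (l₁ ++ [f, e]) a = List.idxOf a l₁ := by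
    intro a ha
    exact List.idxOf_append_of_mem ha
  have hlenlt : ∀ a ∈ l₁, List.idxOf a l₁ < l₁.length :=
    fun a ha => List.idxOf_lt_length_iff.2 ha
  have memof : ∀ a, a ∈ l₁ ++ e :: f :: l₂ → tracePos (l₁ ++ e :: f :: l₂) a < l₁.length →
      a ∈ l₁ := by
    intro a ha hlt
    by_contra hna
    rw [tracePos, List.idxOf_append_of_notMem hna] at hlt
    omega
  refine ⟨⟨htid.symm, x, hfx, hex, Or.inl ⟨xf, hxf⟩⟩, l₁ ++ [f, e], ?_, l₁, [], by simp⟩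
  constructor
  · -- nodup
    rw [List.nodup_append]
    refine ⟨hnd1, by simp [Ne.symm hef], fun a ha b hb hab => ?_⟩
    subst hab
    simp only [List.mem_cons, List.mem_singleton, List.not_mem_nil, or_false] at hb
    rcases hb with rfl | rfl
    · exact hfnl ha
    · exact henl ha
  · -- sub
    intro a ha
    apply hcrp.sub
    simp only [List.mem_append, List.mem_cons] at ha ⊢
    tauto
  · -- program order
    intro i
    refine List.IsPrefix.trans ?_ (hcrp.programOrder i)
    by_cases h1 : e.tid = i <;> by_cases h2 : f.tid = i
    · exact absurd (h1.trans h2.symm) htid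
    · exact ⟨List.filter (fun a => a.tid = i) l₂, by simp [h1, h2]⟩
    · exact ⟨List.filter (fun a => a.tid = i) l₂, by simp [h1, h2]⟩
    · exact ⟨List.filter (fun a => a.tid = i) l₂, by simp [h1, h2]⟩
  · -- last writer
    intro r hr w hlw
    have hrl₁ : r ∈ l₁ := by
      simp only [List.mem_append, List.mem_cons, List.mem_singleton, List.not_mem_nil,
        or_false] at hr
      rcases hr with hr | rfl | rfl
      · exact hr
      · obtain ⟨_, _, xx, _, hread, _⟩ := hlw
        rw [hxf] at hread; cases hread
      · obtain ⟨_, _, xx, _, hread, _⟩ := hlw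
        rw [hxe] at hread; cases hread
    have hrT' : r ∈ l₁ ++ e :: f :: l₂ := by simp [hrl₁]
    obtain ⟨hwT', hlw'⟩ := hcrp.lastWriter r hrT' w hlw
    obtain ⟨_, _, xx, hwxx, hrxx, hlt, hmax⟩ := hlw'
    have hwl₁ : w ∈ l₁ := by
      apply memof w hwT'
      calc tracePos (l₁ ++ e :: f :: l₂) w < tracePos (l₁ ++ e :: f :: l₂) r := hlt
        _ = List.idxOf r l₁ := posmem r hrl₁
        _ < l₁.length := hlenlt r hrl₁
    have hwmem : w ∈ l₁ ++ [f, e] := by simp [hwl₁]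
    refine ⟨hwmem, hwmem, by simp [hrl₁], xx, hwxx, hrxx, ?_, ?_⟩
    · rw [posmem' w hwl₁, posmem' r hrl₁, ← posmem w hwl₁, ← posmem r hrl₁]
      exact hlt
    · intro w' hw' hw'x hw'lt
      have hw'l₁ : w' ∈ l₁ := by
        by_contra hna
        simp only [List.mem_append, List.mem_cons, List.mem_singleton, List.not_mem_nil,
          or_false] at hw'
        have : tracePos (l₁ ++ [f, e]) w' ≥ l₁.length := by
          rw [tracePos, List.idxOf_append_of_notMem hna]
          omega
        rw [posmem' r hrl₁] at hw'lt
        have := hlenlt r hrl₁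
        omega
      rw [posmem' w' hw'l₁, posmem' w hwl₁]
      rw [← posmem w' hw'l₁, ← posmem w hwl₁]
      apply hmax w' (by simp [hw'l₁]) hw'x
      rw [posmem' w' hw'l₁, posmem' r hrl₁, ← posmem w' hw'l₁, ← posmem r hrl₁] at hw'lt
      exact hw'lt
  · -- lock semantics
    intro a₁ ha₁ a₂ ha₂ y hy₁ hy₂ hlt
    have ha₁l₁ : a₁ ∈ l₁ := by
      simp only [List.mem_append, List.mem_cons, List.mem_singleton, List.not_mem_nil,
        or_false] at ha₁
      rcases ha₁ with h | rfl | rfl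
      · exact h
      · rw [hxf] at hy₁; cases hy₁
      · rw [hxe] at hy₁; cases hy₁
    have ha₂l₁ : a₂ ∈ l₁ := by
      simp only [List.mem_append, List.mem_cons, List.mem_singleton, List.not_mem_nil,
        or_false] at ha₂
      rcases ha₂ with h | rfl | rfl
      · exact h
      · rw [hxf] at hy₂; cases hy₂
      · rw [hxe] at hy₂; cases hy₂
    rw [posmem' a₁ ha₁l₁, posmem' a₂ ha₂l₁, ← posmem a₁ ha₁l₁, ← posmem a₂ ha₂l₁] at hlt
    obtain ⟨rl, hrlmem, hrlop, hrltid, h1, h2⟩ :=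
      hcrp.lockSemantics a₁ (by simp [ha₁l₁]) a₂ (by simp [ha₂l₁]) y hy₁ hy₂ hlt
    have hrll₁ : rl ∈ l₁ := by
      apply memof rl hrlmem
      calc tracePos (l₁ ++ e :: f :: l₂) rl < tracePos (l₁ ++ e :: f :: l₂) a₂ := h2
        _ = List.idxOf a₂ l₁ := posmem a₂ ha₂l₁
        _ < l₁.length := hlenlt a₂ ha₂l₁
    refine ⟨rl, by simp [hrll₁], hrlop, hrltid, ?_, ?_⟩
    · rw [posmem' a₁ ha₁l₁, posmem' rl hrll₁, ← posmem a₁ ha₁l₁, ← posmem rl hrll₁]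
      exact h1
    · rw [posmem' a₂ ha₂l₁, posmem' rl hrll₁, ← posmem a₂ ha₂l₁, ← posmem rl hrll₁]
      exact h2
end

section
/- The PWR relation equals the PWRA relation: the partial order obtained by closing program order and write-read dependencies under the general release-order-dependency rule (ROD: if e ∈ CS(y), f ∈ CS'(y) and e < f, then rel(CS(y)) < f) coincides with the partial order obtained by closing under the restricted rule using only the acquire event (ROD-A: if CS(y) precedes CS'(y) in the trace, f ∈ CS'(y) and acq(CS(y)) < f, then rel(CS(y)) < f). -/
/-- The PWR relation: smallest partial order closed under program order (PO),
write-read dependency (WRD) and release-order dependency (ROD). -/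
inductive PWR (T : List Event) : Event → Event → Prop
  | po {e f : Event} : e ∈ T → f ∈ T → e.tid = f.tid →
      tracePos T e < tracePos T f → PWR T e f
  | wrd {w r : Event} : LastWriteOf T w r → PWR T w r
  | rod {y : ℕ} {a rl a' rl' e f : Event} :
      InCS T y a rl e → InCS T y a' rl' f → a ≠ a' → PWR T e f → PWR T rl f
  | trans {e f g : Event} : PWR T e f → PWR T f g → PWR T e g

/-- The PWRA relation: PO and WRD closed under the restricted ROD rule that
only uses the acquire event of the earlier critical section. -/
inductive PWRA (T : List Event) : Event → Event → Prop
  | po {e f : Event} : e ∈ T → f ∈ T → e.tid = f.tid →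
      tracePos T e < tracePos T f → PWRA T e f
  | wrd {w r : Event} : LastWriteOf T w r → PWRA T w r
  | rodA {y : ℕ} {a rl a' rl' f : Event} :
      IsCS T y a rl → IsCS T y a' rl' → tracePos T a < tracePos T a' →
      InCS T y a' rl' f → PWRA T a f → PWRA T rl f
  | trans {e f g : Event} : PWRA T e f → PWRA T f g → PWRA T e g

lemma pos_inj {T : List Event} (hnd : T.Nodup) {a b : Event} (ha : a ∈ T) (hb : b ∈ T)
    (h : tracePos T a = tracePos T b) : a = b := by
  unfold tracePos at h
  exact (List.idxOf_inj ha).1 h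

/-- Two distinct critical sections on the same lock occupy disjoint trace intervals. -/
lemma cs_disjoint {T : List Event} (hT : WellFormed T) {y : ℕ} {a rl a' rl' : Event}
    (h1 : IsCS T y a rl) (h2 : IsCS T y a' rl')
    (hlt : tracePos T a < tracePos T a') : tracePos T rl < tracePos T a' := by
  obtain ⟨hnd, hrel, hacq⟩ := hT
  obtain ⟨rl'', hmem, hop, _, hlt1, hlt2⟩ :=
    hacq a h1.1 a' h2.1 y h1.2.2.1 h2.2.2.1 hlt
  by_contra h
  push_neg at h
  exact h1.2.2.2.2.2.2 rl'' hmem (Or.inr hop) ⟨hlt1, lt_of_lt_of_le hlt2 h⟩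

/-- PWR is consistent with the trace order. -/
lemma pwr_pos {T : List Event} (hT : WellFormed T) {e f : Event} (h : PWR T e f) :
    tracePos T e < tracePos T f := by
  induction h with
  | po _ _ _ h => exact h
  | wrd h =>
    obtain ⟨_, _, x, _, _, hlt, _⟩ := h
    exact hlt
  | @rod y a rl a' rl' ev fv he hf hne _ ih =>
    obtain ⟨hcs1, _, _, hae, her⟩ := he
    obtain ⟨hcs2, _, _, ha'f, hfr'⟩ := hf
    rcases lt_trichotomy (tracePos T a) (tracePos T a') with h | h | h
    · exact lt_of_lt_of_le (cs_disjoint hT hcs1 hcs2 h) ha'f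
    · exact absurd (pos_inj hT.1 hcs1.1 hcs2.1 h) hne
    · have hd := cs_disjoint hT hcs2 hcs1 h
      omega
  | trans _ _ ih1 ih2 => exact lt_trans ih1 ih2

/-- PWR coincides with PWRA on every well-formed trace. -/
theorem stmt5 (T : List Event) (hT : WellFormed T) (e f : Event) :
    PWR T e f ↔ PWRA T e f := by
  constructor
  · intro h
    induction h with
    | po h1 h2 h3 h4 => exact PWRA.po h1 h2 h3 h4
    | wrd h => exact PWRA.wrd h
    | @rod y a rl a' rl' ev fv he hf hne hpwr ih =>
      obtain ⟨hcs1, hem, het, hae, her⟩ := he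
      have hlt : tracePos T a < tracePos T a' := by
        obtain ⟨hcs2, _, _, ha'f, hfr'⟩ := hf
        rcases lt_trichotomy (tracePos T a) (tracePos T a') with h | h | h
        · exact h
        · exact absurd (pos_inj hT.1 hcs1.1 hcs2.1 h) hne
        · have hd := cs_disjoint hT hcs2 hcs1 h
          have hef := pwr_pos hT hpwr
          omega
      have haf : PWRA T a fv := by
        rcases eq_or_lt_of_le hae with heq | hlt'
        · have : a = ev := pos_inj hT.1 hcs1.1 hem heq
          rw [this]; exact ih
        · exact PWRA.trans (PWRA.po hcs1.1 hem het.symm hlt') ih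
      exact PWRA.rodA hcs1 hf.1 hlt hf haf
    | trans _ _ ih1 ih2 => exact PWRA.trans ih1 ih2
  · intro h
    induction h with
    | po h1 h2 h3 h4 => exact PWR.po h1 h2 h3 h4
    | wrd h => exact PWR.wrd h
    | @rodA y a rl a' rl' fv hcs1 hcs2 hlt hf _ ih =>
      have hne : a ≠ a' := fun heq => by rw [heq] at hlt; exact lt_irrefl _ hlt
      have ha : InCS T y a rl a :=
        ⟨hcs1, hcs1.1, rfl, le_refl _, le_of_lt hcs1.2.2.2.2.2.1⟩
      exact PWR.rod ha hf hne ih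
    | trans _ _ ih1 ih2 => exact PWR.trans ih1 ih2
end

section
/- The PWRR relation (ROD restricted to read events f) is contained in PWR, but PWR is not contained in PWRR in general: there exists a trace in which two events are PWR-ordered but not PWRR-ordered. -/
/-- The PWRR relation: PO and WRD closed under ROD restricted to read
events `f`. -/
inductive PWRR (T : List Event) : Event → Event → Prop
  | po {e f : Event} : e ∈ T → f ∈ T → e.tid = f.tid →
      tracePos T e < tracePos T f → PWRR T e f
  | wrd {w r : Event} : LastWriteOf T w r → PWRR T w r
  | rodR {y : ℕ} {a rl a' rl' e f : Event} :
      InCS T y a rl e → InCS T y a' rl' f → a ≠ a' → f.isRead →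
      PWRR T e f → PWRR T rl f
  | trans {e f g : Event} : PWRR T e f → PWRR T f g → PWRR T e g


def ev1 : Event := ⟨1, 1, Op.acquire 2⟩
def ev2 : Event := ⟨1, 2, Op.write 0⟩
def ev3 : Event := ⟨1, 3, Op.write 1⟩
def ev4 : Event := ⟨1, 4, Op.release 2⟩
def ev5 : Event := ⟨2, 5, Op.read 0⟩
def ev6 : Event := ⟨2, 6, Op.acquire 2⟩
def ev7 : Event := ⟨2, 7, Op.write 1⟩
def ev8 : Event := ⟨2, 8, Op.release 2⟩
def ev9 : Event := ⟨2, 9, Op.write 1⟩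

def Tr : List Event := [ev1, ev2, ev3, ev4, ev5, ev6, ev7, ev8, ev9]

def R (e f : Event) : Prop :=
  e ∈ Tr ∧ f ∈ Tr ∧ ((e.tid = f.tid ∧ e.uid < f.uid) ∨ (e.uid ≤ 2 ∧ f.tid = 2))

lemma mem_Tr {e : Event} (h : e ∈ Tr) :
    e = ev1 ∨ e = ev2 ∨ e = ev3 ∨ e = ev4 ∨ e = ev5 ∨ e = ev6 ∨ e = ev7 ∨
      e = ev8 ∨ e = ev9 := by
  simpa [Tr] using h

lemma po_uid : ∀ e ∈ Tr, ∀ f ∈ Tr, tracePos Tr e < tracePos Tr f → e.uid < f.uid := by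
  decide

lemma lw_char {w r : Event} (h : LastWriteOf Tr w r) : w = ev2 ∧ r = ev5 := by
  obtain ⟨hw, hr, x, hwx, hrx, _, _⟩ := h
  have hr' : r = ev5 ∧ x = 0 := by
    rcases mem_Tr hr with h | h | h | h | h | h | h | h | h <;> subst h <;>
      simp_all [ev1, ev2, ev3, ev4, ev5, ev6, ev7, ev8, ev9]
  obtain ⟨hr5, hx⟩ := hr'
  subst hx
  refine ⟨?_, hr5⟩
  rcases mem_Tr hw with h | h | h | h | h | h | h | h | h <;> subst h <;>
    simp_all [ev1, ev2, ev3, ev4, ev5, ev6, ev7, ev8, ev9]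

lemma read_char {f : Event} (hf : f ∈ Tr) (hr : f.isRead) : f = ev5 := by
  obtain ⟨x, hx⟩ := hr
  rcases mem_Tr hf with h | h | h | h | h | h | h | h | h <;> subst h <;>
    simp_all [ev1, ev2, ev3, ev4, ev5, ev6, ev7, ev8, ev9]

lemma no_cs_e5 {y : ℕ} {a rl : Event} (h : InCS Tr y a rl ev5) : False := by
  obtain ⟨⟨haT, _, hacq, _, _, _, _⟩, _, htid, hle, _⟩ := h
  rcases mem_Tr haT with h | h | h | h | h | h | h | h | h <;> subst h
  · exact absurd htid (by decide)
  · simp [ev2] at hacq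
  · simp [ev3] at hacq
  · simp [ev4] at hacq
  · simp [ev5] at hacq
  · exact absurd hle (by decide)
  · simp [ev7] at hacq
  · simp [ev8] at hacq
  · simp [ev9] at hacq

lemma pwrr_sub_R {e f : Event} (h : PWRR Tr e f) : R e f := by
  induction h with
  | po he hf htid hlt =>
      exact ⟨he, hf, Or.inl ⟨htid, po_uid _ he _ hf hlt⟩⟩
  | wrd hlw =>
      obtain ⟨hw, hr⟩ := lw_char hlw
      subst hw; subst hr
      exact ⟨by decide, by decide, Or.inr ⟨by decide, rfl⟩⟩
  | rodR hcs1 hcs2 hne hread _ _ =>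
      exact absurd hcs2 (by
        have := read_char hcs2.2.1 hread
        subst this
        exact fun h => no_cs_e5 h)
  | trans _ _ ih1 ih2 =>
      obtain ⟨he, _, h1⟩ := ih1
      obtain ⟨_, hg, h2⟩ := ih2
      refine ⟨he, hg, ?_⟩
      rcases h1 with ⟨t1, u1⟩ | ⟨u1, t1⟩ <;> rcases h2 with ⟨t2, u2⟩ | ⟨u2, t2⟩
      · exact Or.inl ⟨t1.trans t2, u1.trans u2⟩
      · exact Or.inr ⟨by omega, t2⟩
      · exact Or.inr ⟨u1, by omega⟩
      · exact Or.inr ⟨u1, t2⟩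

lemma hlw25 : LastWriteOf Tr ev2 ev5 :=
  ⟨by decide, by decide, 0, rfl, rfl, by decide, by decide⟩

lemma hcs1 : InCS Tr 2 ev1 ev4 ev2 :=
  ⟨⟨by decide, by decide, rfl, rfl, rfl, by decide, by decide⟩,
    by decide, rfl, by decide, by decide⟩

lemma hcs2 : InCS Tr 2 ev6 ev8 ev7 :=
  ⟨⟨by decide, by decide, rfl, rfl, rfl, by decide, by decide⟩,
    by decide, rfl, by decide, by decide⟩

/-- PWRR is contained in PWR, but PWR is not contained in PWRR in general. -/
theorem stmt6 :
    (∀ (T : List Event) (e f : Event), PWRR T e f → PWR T e f) ∧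
    ∃ (T : List Event) (e f : Event), PWR T e f ∧ ¬ PWRR T e f := by
  constructor
  · intro T e f h
    induction h with
    | po he hf htid hlt => exact PWR.po he hf htid hlt
    | wrd hlw => exact PWR.wrd hlw
    | rodR h1 h2 hne _ _ ih => exact PWR.rod h1 h2 hne ih
    | trans _ _ ih1 ih2 => exact PWR.trans ih1 ih2
  · refine ⟨Tr, ev4, ev7, ?_, ?_⟩
    · exact PWR.rod hcs1 hcs2 (by decide)
        (PWR.trans (PWR.wrd hlw25) (PWR.po (by decide) (by decide) rfl (by decide)))
    · intro h
      obtain ⟨_, _, ⟨ht, _⟩ | ⟨hu, _⟩⟩ := pwrr_sub_R h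
      · exact absurd ht (by decide)
      · exact absurd hu (by decide)
end

section
/- For the partial orders SHB (PO + WRD + release-acquire order of critical sections on the same lock in trace order) and WCP, every WCP ordering e <_WCP f implies e <_SHB f; that is, WCP ⊆ SHB. -/
/-- The SHB relation: PO, WRD, and release-acquire order (RAD) of critical
sections on the same lock in trace order. -/
inductive SHB (T : List Event) : Event → Event → Prop
  | po {e f : Event} : e ∈ T → f ∈ T → e.tid = f.tid →
      tracePos T e < tracePos T f → SHB T e f
  | wrd {w r : Event} : LastWriteOf T w r → SHB T w r
  | rad {y : ℕ} {a rl a' rl' : Event} : IsCS T y a rl → IsCS T y a' rl' →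
      tracePos T rl < tracePos T a' → SHB T rl a'
  | trans {e f g : Event} : SHB T e f → SHB T f g → SHB T e g

/-- The WCP relation: PO plus ordering of critical sections on the same lock
only when they contain conflicting events. -/
inductive WCP (T : List Event) : Event → Event → Prop
  | po {e f : Event} : e ∈ T → f ∈ T → e.tid = f.tid →
      tracePos T e < tracePos T f → WCP T e f
  | ccs {y : ℕ} {a rl a' rl' e f : Event} :
      IsCS T y a rl → IsCS T y a' rl' → tracePos T rl < tracePos T a' →
      InCS T y a rl e → InCS T y a' rl' f → Conflict e f → WCP T rl f
  | trans {e f g : Event} : WCP T e f → WCP T f g → WCP T e g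

/-- Every WCP ordering is also an SHB ordering: WCP ⊆ SHB. -/
theorem stmt7 (T : List Event) (e f : Event) (h : WCP T e f) : SHB T e f := by
  induction h with
  | po he hf ht hp => exact SHB.po he hf ht hp
  | ccs hcs hcs' hlt hin hin' hc =>
    have h1 := SHB.rad hcs hcs' hlt
    rcases hin' with ⟨hcs'', hfT, htid, hle, hle'⟩
    rcases eq_or_lt_of_le hle with heq | hltp
    · have := (List.idxOf_inj hcs'.1).mp heq
      rwa [this] at h1
    · exact SHB.trans h1 (SHB.po hcs'.1 hfT htid.symm hltp)
  | trans _ _ ih1 ih2 => exact SHB.trans ih1 ih2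
end

section
/- There exists a trace T with a potential Lockset-PWR race pair (two PWR-unordered conflicting writes with empty locksets) that is not a predictable race pair. Hence Lockset + PWR is unsound in general (for more than two threads). -/
namespace ListAux

open List

variable {α : Type*} [DecidableEq α]

theorem indexOf_eq_of_getElem {l : List α} (hnd : l.Nodup) {i : ℕ} (hi : i < l.length)
    {a : α} (ha : l[i] = a) : List.idxOf a l = i := by
  have hm : a ∈ l := ha ▸ List.getElem_mem hi
  have hlt : List.idxOf a l < l.length := List.idxOf_lt_length_iff.2 hm
  have h1 : l[List.idxOf a l] = a := List.getElem_idxOf hlt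
  exact (hnd.getElem_inj_iff.1 (h1.trans ha.symm))

theorem indexOf_lt_iff_sublist {l : List α} (hnd : l.Nodup) {u v : α}
    (hu : u ∈ l) (hv : v ∈ l) :
    List.idxOf u l < List.idxOf v l ↔ [u, v] <+ l := by
  constructor
  · intro hlt
    set i := List.idxOf u l with hi
    set j := List.idxOf v l with hj
    have hjl : j < l.length := List.idxOf_lt_length_iff.2 hv
    have hgv : l[j] = v := List.getElem_idxOf hjl
    have hgu : l[i] = u := List.getElem_idxOf (List.idxOf_lt_length_iff.2 hu)
    have hdrop : l.drop j = v :: l.drop (j + 1) := by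
      rw [List.drop_eq_getElem_cons hjl, hgv]
    have hutake : u ∈ l.take j := by
      have : (l.take j)[i]? = l[i]? := List.getElem?_take_of_lt hlt
      have : (l.take j)[i]? = some u := by
        rw [this, List.getElem?_eq_getElem (List.idxOf_lt_length_iff.2 hu), hgu]
      exact List.mem_of_getElem? this
    have : [u] ++ [v] <+ l.take j ++ (v :: l.drop (j + 1)) :=
      List.Sublist.append (List.singleton_sublist.2 hutake)
        (List.cons_sublist_cons.2 (List.nil_sublist _))
    simpa [← hdrop, List.take_append_drop] using this
  · intro hs
    obtain ⟨f, hf⟩ := List.sublist_iff_exists_orderEmbedding_getElem?_eq.1 hs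
    have h0 := hf 0
    have h1 := hf 1
    rw [show ([u, v][0]? = some u) from rfl, eq_comm, List.getElem?_eq_some_iff] at h0
    rw [show ([u, v][1]? = some v) from rfl, eq_comm, List.getElem?_eq_some_iff] at h1
    obtain ⟨hu0, hgu⟩ := h0
    obtain ⟨hv1, hgv⟩ := h1
    rw [indexOf_eq_of_getElem hnd hu0 hgu, indexOf_eq_of_getElem hnd hv1 hgv]
    exact f.strictMono (by norm_num)

theorem prefix_indexOf_eq {s l : List α} (h : s <+: l) {a : α} (ha : a ∈ s) :
    List.idxOf a l = List.idxOf a s := by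
  obtain ⟨t, rfl⟩ := h
  exact List.idxOf_append_of_mem ha

theorem mem_of_prefix_of_indexOf_lt {s l : List α} (h : s <+: l) {a b : α}
    (hb : b ∈ s) (ha : a ∈ l) (hlt : List.idxOf a l < List.idxOf b l) : a ∈ s := by
  by_contra hna
  obtain ⟨t, rfl⟩ := h
  rw [List.idxOf_append_of_notMem hna, List.idxOf_append_of_mem hb] at hlt
  have h1 : List.idxOf b s < s.length := List.idxOf_lt_length_iff.2 hb
  omega

theorem filter_prefix_transfer {l s : List α} {p : α → Bool}
    (hl : l.Nodup) (hs : s.Nodup) (hpre : s.filter p <+: l.filter p)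
    {u v : α} (hu : u ∈ l) (hv : v ∈ l) (hpu : p u = true) (hpv : p v = true)
    (hlt : List.idxOf u l < List.idxOf v l) (hvs : v ∈ s) :
    u ∈ s ∧ List.idxOf u s < List.idxOf v s := by
  have hfu : u ∈ l.filter p := List.mem_filter.2 ⟨hu, hpu⟩
  have hfv : v ∈ l.filter p := List.mem_filter.2 ⟨hv, hpv⟩
  have hfvs : v ∈ s.filter p := List.mem_filter.2 ⟨hvs, hpv⟩
  have hsubl : [u, v] <+ l := (indexOf_lt_iff_sublist hl hu hv).1 hlt
  have hsubf : [u, v] <+ l.filter p := by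
    have := hsubl.filter p
    simpa [List.filter, hpu, hpv] using this
  have hltf : List.idxOf u (l.filter p) < List.idxOf v (l.filter p) :=
    (indexOf_lt_iff_sublist (hl.filter p) hfu hfv).2 hsubf
  have hfus : u ∈ s.filter p := mem_of_prefix_of_indexOf_lt hpre hfvs hfu hltf
  have hus : u ∈ s := (List.mem_filter.1 hfus).1
  have hltsf : List.idxOf u (s.filter p) < List.idxOf v (s.filter p) := by
    rwa [prefix_indexOf_eq hpre hfus, prefix_indexOf_eq hpre hfvs] at hltf
  have hsubs : [u, v] <+ s :=
    ((indexOf_lt_iff_sublist (hs.filter p) hfus hfvs).1 hltsf).trans List.filter_sublist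
  exact ⟨hus, (indexOf_lt_iff_sublist hs hus hvs).2 hsubs⟩

end ListAux
/-! ### The witness trace -/

def e0 : Event := ⟨1, 0, Op.acquire 5⟩
def e1 : Event := ⟨1, 1, Op.write 1⟩
def e2 : Event := ⟨2, 2, Op.read 1⟩
def e3 : Event := ⟨2, 3, Op.write 0⟩
def e4 : Event := ⟨2, 4, Op.write 2⟩
def e5 : Event := ⟨1, 5, Op.read 2⟩
def e6 : Event := ⟨1, 6, Op.release 5⟩
def e7 : Event := ⟨3, 7, Op.acquire 5⟩
def e8 : Event := ⟨3, 8, Op.write 3⟩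
def e9 : Event := ⟨4, 9, Op.read 3⟩
def e10 : Event := ⟨4, 10, Op.write 0⟩
def e11 : Event := ⟨4, 11, Op.write 4⟩
def e12 : Event := ⟨3, 12, Op.read 4⟩
def e13 : Event := ⟨3, 13, Op.release 5⟩

def TT : List Event :=
  [e0, e1, e2, e3, e4, e5, e6, e7, e8, e9, e10, e11, e12, e13]

lemma TT_nodup : TT.Nodup := by decide

/-- Any acquire in `TT` is `e0` or `e7`. -/
lemma acq_cases : ∀ a ∈ TT, ∀ y : ℕ, a.op = Op.acquire y → y = 5 ∧ (a = e0 ∨ a = e7) := by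
  intro a ha y hy
  simp only [TT, e0, e1, e2, e3, e4, e5, e6, e7, e8, e9, e10, e11, e12, e13,
    List.mem_cons, List.not_mem_nil, or_false] at ha
  rcases ha with rfl | rfl | rfl | rfl | rfl | rfl | rfl | rfl | rfl | rfl | rfl | rfl | rfl | rfl <;>
    simp_all [e0, e7]

lemma rel_cases1 : ∀ g ∈ TT, g.op = Op.release 5 → g.tid = 1 → g = e6 := by decide

lemma rel_cases3 : ∀ g ∈ TT, g.op = Op.release 5 → g.tid = 3 → g = e13 := by decide

lemma tid_half : ∀ g ∈ TT, (g.tid = 1 → g.uid ≤ 6) ∧ (g.tid = 3 → 7 ≤ g.uid) := by decide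

lemma pos_uid : ∀ a ∈ TT, ∀ b ∈ TT, tracePos TT a < tracePos TT b → a.uid < b.uid := by decide

lemma tid_uid_half : ∀ a ∈ TT, ∀ b ∈ TT, a.tid = b.tid → ((a.uid ≤ 6) ↔ (b.uid ≤ 6)) := by decide

/-- Characterisation of the write-read dependencies in `TT`. -/
lemma lw_char_s10 : ∀ w r : Event, LastWriteOf TT w r →
    w.uid < r.uid ∧ ((w.uid ≤ 6) ↔ (r.uid ≤ 6)) := by
  intro w r hlw
  obtain ⟨hw, hr, x, hwop, hrop, -, -⟩ := hlw
  simp only [TT, List.mem_cons, List.not_mem_nil, or_false] at hw hr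
  rcases hr with rfl | rfl | rfl | rfl | rfl | rfl | rfl | rfl | rfl | rfl | rfl | rfl | rfl | rfl <;>
  rcases hw with rfl | rfl | rfl | rfl | rfl | rfl | rfl | rfl | rfl | rfl | rfl | rfl | rfl | rfl <;>
    simp_all [e0, e1, e2, e3, e4, e5, e6, e7, e8, e9, e10, e11, e12, e13] <;> omega

/-- Invariant bounding PWR in `TT`: uid increases and stays in its half. -/
lemma pwr_inv : ∀ u v : Event, PWR TT u v →
    u.uid < v.uid ∧ ((u.uid ≤ 6) ↔ (v.uid ≤ 6)) := by
  intro u v h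
  induction h with
  | po hu hv htid hlt =>
      exact ⟨pos_uid _ hu _ hv hlt, tid_uid_half _ hu _ hv htid⟩
  | wrd hlw => exact lw_char_s10 _ _ hlw
  | rod h1 h2 hne _ ih =>
      exfalso
      obtain ⟨⟨haT, -, haop, -⟩, heT, hetid, -, -⟩ := h1
      obtain ⟨⟨haT', -, haop', -⟩, hfT, hftid, -, -⟩ := h2
      obtain ⟨rfl, ha⟩ := acq_cases _ haT _ haop
      obtain ⟨-, ha'⟩ := acq_cases _ haT' _ haop'
      have he' := tid_half _ heT
      have hf' := tid_half _ hfT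
      rcases ha with rfl | rfl <;> rcases ha' with rfl | rfl
      · exact hne rfl
      · have h1 : _ ≤ 6 := he'.1 hetid
        have h2 : 7 ≤ _ := hf'.2 hftid
        have := ih.2.1 h1
        omega
      · have h1 : 7 ≤ _ := he'.2 hetid
        have h2 : _ ≤ 6 := hf'.1 hftid
        have := ih.1
        omega
      · exact hne rfl
  | trans h1 h2 ih1 ih2 =>
      exact ⟨ih1.1.trans ih2.1, ih1.2.trans ih2.2⟩

lemma not_pwr_ef : ¬ PWR TT e3 e10 := by
  intro h
  have := pwr_inv _ _ h
  simp only [e3, e10] at this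
  omega

lemma not_pwr_fe : ¬ PWR TT e10 e3 := by
  intro h
  have := pwr_inv _ _ h
  simp only [e3, e10] at this
  omega

lemma isCS_06 : IsCS TT 5 e0 e6 := by
  unfold IsCS
  decide

lemma isCS_713 : IsCS TT 5 e7 e13 := by
  unfold IsCS
  decide

lemma wf_TT : WellFormed TT := by
  refine ⟨TT_nodup, ?_, ?_⟩
  · intro r hr y hy
    simp only [TT, List.mem_cons, List.not_mem_nil, or_false] at hr
    rcases hr with rfl | rfl | rfl | rfl | rfl | rfl | rfl | rfl | rfl | rfl | rfl | rfl | rfl | rfl <;>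
      first
        | (exfalso; simp [e0, e1, e2, e3, e4, e5, e7, e8, e9, e10, e11, e12] at hy)
        | (obtain rfl : (5 : ℕ) = y := by simpa [e6, e13] using hy
           exact ⟨e0, isCS_06⟩)
        | (obtain rfl : (5 : ℕ) = y := by simpa [e6, e13] using hy
           exact ⟨e7, isCS_713⟩)
  · intro a1 h1 a2 h2 y hy1 hy2 hlt
    obtain ⟨rfl, ha1⟩ := acq_cases _ h1 _ hy1
    obtain ⟨-, ha2⟩ := acq_cases _ h2 _ hy2
    rcases ha1 with rfl | rfl <;> rcases ha2 with rfl | rfl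
    · exact absurd hlt (by decide)
    · exact ⟨e6, by decide, rfl, rfl, by decide, by decide⟩
    · exact absurd hlt (by decide)
    · exact absurd hlt (by decide)

lemma lockset_empty_of_tid (g : Event) (h2 : g.tid = 2 ∨ g.tid = 4) :
    Lockset TT g = ∅ := by
  rw [Set.eq_empty_iff_forall_notMem]
  intro y hy
  obtain ⟨a, r, ⟨haT, -, haop, -⟩, -, hgtid, -, -⟩ := hy
  obtain ⟨-, ha⟩ := acq_cases a haT _ haop
  rcases ha with rfl | rfl <;> rcases h2 with h2 | h2 <;>
    simp only [e0, e7] at hgtid <;> omega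

/-- Program-order transfer into a correctly reordered prefix. -/
lemma po_transfer {T' : List Event} (h : CorrectlyReorderedPrefix TT T')
    {u v : Event} (hu : u ∈ TT) (hv : v ∈ TT) (ht : u.tid = v.tid)
    (hlt : tracePos TT u < tracePos TT v) (hvs : v ∈ T') :
    u ∈ T' ∧ tracePos T' u < tracePos T' v := by
  exact ListAux.filter_prefix_transfer TT_nodup h.nodup (h.programOrder v.tid)
    hu hv (by simp [ht]) (by simp) hlt hvs

lemma lw_12 : LastWriteOf TT e1 e2 :=
  ⟨by decide, by decide, 1, rfl, rfl, by decide, by decide⟩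

lemma lw_45 : LastWriteOf TT e4 e5 :=
  ⟨by decide, by decide, 2, rfl, rfl, by decide, by decide⟩

lemma lw_89 : LastWriteOf TT e8 e9 :=
  ⟨by decide, by decide, 3, rfl, rfl, by decide, by decide⟩

lemma lw_1112 : LastWriteOf TT e11 e12 :=
  ⟨by decide, by decide, 4, rfl, rfl, by decide, by decide⟩

lemma lw_lt {T' : List Event} {w r : Event} (h : LastWriteOf T' w r) :
    tracePos T' w < tracePos T' r := by
  obtain ⟨-, -, x, -, -, hlt, -⟩ := h
  exact hlt

/-- In any correctly reordered prefix containing both `e3` and `e10`, they are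
at least 7 positions apart. -/
lemma separation {T' : List Event} (h : CorrectlyReorderedPrefix TT T')
    (he : e3 ∈ T') (hf : e10 ∈ T') :
    tracePos T' e3 + 7 ≤ tracePos T' e10 ∨ tracePos T' e10 + 7 ≤ tracePos T' e3 := by
  -- thread-2 prefix: e2 ∈ T' before e3
  obtain ⟨h2m, h23⟩ := po_transfer h (u := e2) (v := e3) (by decide) (by decide) (by decide) (by decide) he
  -- WRD: e1 ∈ T' before e2
  obtain ⟨h1m, hlw12⟩ := h.lastWriter e2 h2m e1 lw_12
  have h12 := lw_lt hlw12
  -- thread-1 prefix: e0 ∈ T' before e1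
  obtain ⟨h0m, h01⟩ := po_transfer h (u := e0) (v := e1) (by decide) (by decide) (by decide) (by decide) h1m
  -- thread-4 prefix: e9 ∈ T' before e10
  obtain ⟨h9m, h910⟩ := po_transfer h (u := e9) (v := e10) (by decide) (by decide) (by decide) (by decide) hf
  -- WRD: e8 ∈ T' before e9
  obtain ⟨h8m, hlw89⟩ := h.lastWriter e9 h9m e8 lw_89
  have h89 := lw_lt hlw89
  -- thread-3 prefix: e7 ∈ T' before e8
  obtain ⟨h7m, h78⟩ := po_transfer h (u := e7) (v := e8) (by decide) (by decide) (by decide) (by decide) h8m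
  -- the two acquires have distinct positions in T'
  have hne : tracePos T' e0 ≠ tracePos T' e7 := by
    intro hEq
    have : e0 = e7 := (List.idxOf_inj h0m).1 hEq
    exact absurd this (by decide)
  rcases Nat.lt_or_ge (tracePos T' e0) (tracePos T' e7) with hlt | hge
  · -- e0 before e7 in T' : rel of e0's CS, namely e6, is between them
    obtain ⟨rl, hrlm, hrlop, hrltid, h0rl, hrl7⟩ :=
      h.lockSemantics e0 h0m e7 h7m 5 rfl rfl hlt
    obtain rfl : rl = e6 := rel_cases1 rl (h.sub rl hrlm) hrlop hrltid
    -- e5 ∈ T' before e6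
    obtain ⟨h5m, h56⟩ := po_transfer h (u := e5) (v := e6) (by decide) (by decide) (by decide) (by decide) hrlm
    -- WRD: e4 ∈ T' before e5
    obtain ⟨h4m, hlw45⟩ := h.lastWriter e5 h5m e4 lw_45
    have h45 := lw_lt hlw45
    -- e3 before e4 in T'
    obtain ⟨-, h34⟩ := po_transfer h (u := e3) (v := e4) (by decide) (by decide) (by decide) (by decide) h4m
    left
    omega
  · have hlt' : tracePos T' e7 < tracePos T' e0 := lt_of_le_of_ne hge (Ne.symm hne)
    obtain ⟨rl, hrlm, hrlop, hrltid, h7rl, hrl0⟩ :=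
      h.lockSemantics e7 h7m e0 h0m 5 rfl rfl hlt'
    obtain rfl : rl = e13 := rel_cases3 rl (h.sub rl hrlm) hrlop hrltid
    -- e12 ∈ T' before e13
    obtain ⟨h12m, h1213⟩ := po_transfer h (u := e12) (v := e13) (by decide) (by decide) (by decide) (by decide) hrlm
    -- WRD: e11 ∈ T' before e12
    obtain ⟨h11m, hlw1112⟩ := h.lastWriter e12 h12m e11 lw_1112
    have h1112 := lw_lt hlw1112
    -- e10 before e11 in T'
    obtain ⟨-, h1011⟩ := po_transfer h (u := e10) (v := e11) (by decide) (by decide) (by decide) (by decide) h11m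
    right
    omega

lemma adj_pos {T' : List Event} (hnd : T'.Nodup) {a b : Event} {l1 l2 : List Event}
    (hT : T' = l1 ++ a :: b :: l2) (hne : a ≠ b) :
    a ∈ T' ∧ b ∈ T' ∧ tracePos T' b = tracePos T' a + 1 := by
  subst hT
  rw [List.nodup_append] at hnd
  obtain ⟨-, -, hdisj⟩ := hnd
  have ha1 : a ∉ l1 := fun hmem => hdisj _ hmem _ (by simp) rfl
  have hb1 : b ∉ l1 := fun hmem => hdisj _ hmem _ (by simp) rfl
  refine ⟨by simp, by simp, ?_⟩
  unfold tracePos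
  rw [List.idxOf_append_of_notMem ha1, List.idxOf_append_of_notMem hb1,
    List.idxOf_cons_self, List.idxOf_cons_ne _ hne, List.idxOf_cons_self]

lemma not_race_ef : ¬ RacePair TT e3 e10 := by
  rintro ⟨-, T', hcrp, l1, l2, hT⟩
  obtain ⟨he, hf, hadj⟩ := adj_pos hcrp.nodup hT (by decide)
  have := separation hcrp he hf
  omega

lemma not_race_fe : ¬ RacePair TT e10 e3 := by
  rintro ⟨-, T', hcrp, l1, l2, hT⟩
  obtain ⟨hf, he, hadj⟩ := adj_pos hcrp.nodup hT (by decide)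
  have := separation hcrp he hf
  omega

/-- Lockset + PWR is unsound in general: there is a trace with two
PWR-unordered conflicting writes with empty locksets that do not form a
predictable race pair. -/
theorem stmt10 :
    ∃ (T : List Event) (e f : Event), WellFormed T ∧
      e ∈ T ∧ f ∈ T ∧ Conflict e f ∧ e.isWrite ∧ f.isWrite ∧
      Lockset T e = ∅ ∧ Lockset T f = ∅ ∧ ¬ PWR T e f ∧ ¬ PWR T f e ∧
      ¬ RacePair T e f ∧ ¬ RacePair T f e :=
  ⟨TT, e3, e10, wf_TT, by decide, by decide,
    ⟨by decide, 0, Or.inr rfl, Or.inr rfl, Or.inl ⟨0, rfl⟩⟩,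
    ⟨0, rfl⟩, ⟨0, rfl⟩,
    lockset_empty_of_tid e3 (Or.inl rfl), lockset_empty_of_tid e10 (Or.inr rfl),
    not_pwr_ef, not_pwr_fe, not_race_ef, not_race_fe⟩
end

section
/- Immediate detection of adjacent concurrent pairs: let e, f be read/write events on x with pos(e) < pos(f), e and f PWR-concurrent, and suppose no event g on x with pos(e) < pos(g) < pos(f) is PWR-concurrent to f. Then (e,f) is in the set Conc(x) computed by the first pass of the PWR algorithm. -/
open Classical

/-- One step of the first pass of the PWR algorithm for variable `x`.
The state is `(RW(x), E(x), Conc(x))`. -/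
noncomputable def stepRW (T : List Event) (x : ℕ)
    (st : List Event × List (Event × Event) × List (Event × Event)) (f : Event) :
    List Event × List (Event × Event) × List (Event × Event) :=
  if f.accesses x then
    (f :: st.1.filter (fun g => !decide (PWR T g f)),
     st.2.1 ++ (st.1.filter (fun g => decide (PWR T g f))).map (fun g => (g, f)),
     st.2.2 ++ (st.1.filter
       (fun g => !decide (PWR T g f) && !decide (PWR T f g))).map (fun g => (g, f)))
  else st

/-- The first pass of the PWR algorithm: fold over the trace. -/
noncomputable def firstPass (T : List Event) (x : ℕ) :
    List Event × List (Event × Event) × List (Event × Event) :=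
  T.foldl (stepRW T x) ([], [], [])

/-- The edge constraints `E(x)` produced by the first pass. -/
noncomputable def edgesOf (T : List Event) (x : ℕ) : List (Event × Event) :=
  (firstPass T x).2.1

/-- The concurrent pairs `Conc(x)` produced by the first pass. -/
noncomputable def concOf (T : List Event) (x : ℕ) : List (Event × Event) :=
  (firstPass T x).2.2

/-- PWR is monotone with respect to trace positions (on a duplicate-free trace). -/
lemma pwr_pos_s15 {T : List Event} (hnd : T.Nodup) {a b : Event} (h : PWR T a b) :
    tracePos T a < tracePos T b := by
  induction h with
  | po _ _ _ hlt => exact hlt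
  | wrd hw => exact hw.2.2.choose_spec.2.2.1
  | @rod y a rl a' rl' u v hu hv hne _ ih =>
    obtain ⟨⟨haT, hrlT, haop, hrlop, _, harl, hins⟩, huT, _, hau, hurl⟩ := hu
    obtain ⟨⟨haT', hrlT', haop', hrlop', _, harl', hins'⟩, hvT, _, hav, hvrl⟩ := hv
    -- positions of distinct members differ
    have hpa : tracePos T a ≠ tracePos T a' := by
      intro hEq
      exact hne ((List.idxOf_inj haT).mp hEq)
    rcases lt_or_gt_of_ne hpa with hlt | hgt
    · -- a before a' : a' cannot lie strictly inside (a, rl), so rl ≤ a' ≤ v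
      have h1 := hins a' haT' (Or.inl haop')
      push_neg at h1
      have h2 : tracePos T rl ≤ tracePos T a' := h1 hlt
      have hne2 : rl ≠ a' := by
        intro hEq; rw [hEq] at hrlop; rw [haop'] at hrlop; exact Op.noConfusion hrlop
      have h3 : tracePos T rl ≠ tracePos T a' := by
        intro hEq; exact hne2 ((List.idxOf_inj hrlT).mp hEq)
      exact lt_of_lt_of_le (lt_of_le_of_ne h2 h3) hav
    · -- a' before a : a cannot lie strictly inside (a', rl'), so rl' ≤ a ≤ u < v ≤ rl' : absurd
      have h1 := hins' a haT (Or.inl haop)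
      push_neg at h1
      have h2 : tracePos T rl' ≤ tracePos T a := h1 hgt
      have : tracePos T rl' < tracePos T rl' :=
        lt_of_le_of_lt (le_trans h2 hau) (lt_of_lt_of_le ih hvrl)
      exact absurd this (lt_irrefl _)
  | trans _ _ ih1 ih2 => exact lt_trans ih1 ih2

/-- The `Conc` component only grows along the fold. -/
lemma conc_mono (T : List Event) (x : ℕ) (p : Event × Event) :
    ∀ (L : List Event) (st : List Event × List (Event × Event) × List (Event × Event)),
      p ∈ st.2.2 → p ∈ (L.foldl (stepRW T x) st).2.2 := by
  intro L
  induction L with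
  | nil => intro st h; exact h
  | cons g L ih =>
    intro st h
    apply ih
    unfold stepRW
    split
    · exact List.mem_append_left _ h
    · exact h

/-- An event stays in `RW` along the fold as long as no processed event is
PWR-above it. -/
lemma rw_pres (T : List Event) (x : ℕ) (e : Event) :
    ∀ (L : List Event) (st : List Event × List (Event × Event) × List (Event × Event)),
      e ∈ st.1 → (∀ g ∈ L, g.accesses x → ¬ PWR T e g) →
      e ∈ (L.foldl (stepRW T x) st).1 := by
  intro L
  induction L with
  | nil => intro st h _; exact h
  | cons g L ih =>
    intro st h hg
    apply ih
    · unfold stepRW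
      split
      · rename_i hacc
        refine List.mem_cons_of_mem _ ?_
        refine List.mem_filter.mpr ⟨h, ?_⟩
        simp [hg g List.mem_cons_self hacc]
      · exact h
    · intro g' hg' hacc'
      exact hg g' (List.mem_cons_of_mem _ hg') hacc'

/-- Immediate detection of adjacent concurrent pairs: if `e`, `f` are
PWR-concurrent reads/writes on `x` with no intermediate event on `x` that is
PWR-concurrent to `f`, then `(e, f)` is recorded in `Conc(x)`. -/
theorem stmt15 (T : List Event) (x : ℕ) (e f : Event)
    (hT : WellFormed T) (he : e ∈ T) (hf : f ∈ T)
    (hex : e.accesses x) (hfx : f.accesses x)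
    (hpos : tracePos T e < tracePos T f)
    (h₁ : ¬ PWR T e f) (h₂ : ¬ PWR T f e)
    (hmid : ∀ g ∈ T, g.accesses x → tracePos T e < tracePos T g →
      tracePos T g < tracePos T f → PWR T g f ∨ PWR T f g) :
    (e, f) ∈ concOf T x := by
  have hnd : T.Nodup := hT.1
  have hfe : f ≠ e := fun hEq => absurd hpos (by rw [hEq]; exact lt_irrefl _)
  -- decompose T around e
  obtain ⟨L1, R, hTd⟩ := List.append_of_mem he
  have heL1 : e ∉ L1 := by
    rw [hTd, List.nodup_append] at hnd
    exact fun hmem => hnd.2.2 e hmem e List.mem_cons_self rfl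
  have hnd : T.Nodup := hT.1
  have hposE : tracePos T e = L1.length := by
    rw [hTd]
    unfold tracePos
    rw [List.idxOf_append_of_notMem heL1, List.idxOf_cons_self]
    omega
  -- f is in R
  have hfR : f ∈ R := by
    rw [hTd] at hf
    rcases List.mem_append.mp hf with hL | hR
    · exfalso
      have : tracePos T f < L1.length := by
        rw [hTd]
        unfold tracePos
        rw [List.idxOf_append_of_mem hL]
        exact List.idxOf_lt_length_iff.mpr hL
      omega
    · rcases List.mem_cons.mp hR with hEq | hR
      · exact absurd hEq hfe
      · exact hR
  obtain ⟨L2, L3, hRd⟩ := List.append_of_mem hfR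
  rw [hRd] at hTd
  -- nodup facts
  have hndT : (L1 ++ e :: (L2 ++ f :: L3)).Nodup := hTd ▸ hnd
  rw [List.nodup_append, List.nodup_cons, List.nodup_append, List.nodup_cons] at hndT
  obtain ⟨-, ⟨henot, hL2n, ⟨hfL3, -⟩, hdisj2⟩, hdisj1⟩ := hndT
  have hfL2 : f ∉ L2 := fun hm => hdisj2 f hm f List.mem_cons_self rfl
  have hfL1 : f ∉ L1 := fun hm =>
    hdisj1 f hm f (List.mem_cons_of_mem e (List.mem_append_right L2 List.mem_cons_self)) rfl
  -- position of f
  have hposF : tracePos T f = L1.length + 1 + L2.length := by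
    rw [hTd]
    unfold tracePos
    rw [List.idxOf_append_of_notMem hfL1, List.idxOf_cons_ne _ hfe.symm,
      List.idxOf_append_of_notMem hfL2, List.idxOf_cons_self]
    omega
  -- positions of the intermediate events
  have hposG : ∀ g ∈ L2, tracePos T e < tracePos T g ∧ tracePos T g < tracePos T f := by
    intro g hg
    have hgL1 : g ∉ L1 := fun hm =>
      hdisj1 g hm g (List.mem_cons_of_mem e (List.mem_append_left _ hg)) rfl
    have hge : e ≠ g := fun hEq => henot (hEq ▸ List.mem_append_left _ hg)
    have : tracePos T g = L1.length + 1 + List.idxOf g L2 := by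
      rw [hTd]
      unfold tracePos
      rw [List.idxOf_append_of_notMem hgL1, List.idxOf_cons_ne _ hge,
        List.idxOf_append_of_mem hg]
      omega
    have hlt : List.idxOf g L2 < L2.length := List.idxOf_lt_length_iff.mpr hg
    omega
  -- no intermediate event on x is PWR-above e
  have hkeep : ∀ g ∈ L2, g.accesses x → ¬ PWR T e g := by
    intro g hg hacc hPWR
    have hgT : g ∈ T := by
      rw [hTd]
      exact List.mem_append_right _ (List.mem_cons_of_mem _ (List.mem_append_left _ hg))
    obtain ⟨hlt1, hlt2⟩ := hposG g hg
    rcases hmid g hgT hacc hlt1 hlt2 with hgf | hfg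
    · exact h₁ (PWR.trans hPWR hgf)
    · have := pwr_pos_s15 hnd hfg
      omega
  -- unfold the fold along the decomposition
  unfold concOf firstPass
  have key : List.foldl (stepRW T x) ([], [], []) T
      = List.foldl (stepRW T x) ([], [], []) (L1 ++ e :: (L2 ++ f :: L3)) :=
    congrArg (fun L => List.foldl (stepRW T x) ([], [], []) L) hTd
  rw [key, List.foldl_append, List.foldl_cons, List.foldl_append, List.foldl_cons]
  set st1 := L1.foldl (stepRW T x) ([], [], []) with hst1
  set st2 := stepRW T x st1 e with hst2
  set st3 := L2.foldl (stepRW T x) st2 with hst3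
  have he2 : e ∈ st2.1 := by
    rw [hst2]
    unfold stepRW
    rw [if_pos hex]
    exact List.mem_cons_self
  have he3 : e ∈ st3.1 := rw_pres T x e L2 st2 he2 hkeep
  have hmem : (e, f) ∈ (stepRW T x st3 f).2.2 := by
    unfold stepRW
    rw [if_pos hfx]
    refine List.mem_append_right _ ?_
    refine List.mem_map.mpr ⟨e, List.mem_filter.mpr ⟨he3, ?_⟩, rfl⟩
    simp [h₁, h₂]
  exact conc_mono T x (e, f) L3 _ hmem
end

section
/- Termination and non-repetition of the second pass: the iterative construction of AllConc(x) — repeatedly taking the smallest pair (e,f) from Conc(x) (ordered by position of the first component), adding it to AllConc(x), removing it, and adding (g,f) for each edge g ≺ e in E(x) — never processes the same pair twice and terminates; moreover every PWR-concurrent conflicting pair (e,f) on x with pos(e) < pos(f) is contained in the resulting AllConc(x). -/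
open Classical

/-- The set of pairs produced by the second pass: pairs of `Conc(x)` closed
under following edge constraints backwards on the first component. -/
inductive AllConc (T : List Event) (x : ℕ) : Event → Event → Prop
  | base {e f : Event} : (e, f) ∈ concOf T x → AllConc T x e f
  | step {e f g : Event} : AllConc T x e f → (g, e) ∈ edgesOf T x → AllConc T x g f

/-- One step of the second pass: `(g, f)` is derived from `(e, f)` via the
edge constraint `g ≺ e`. -/
def secondPassStep (T : List Event) (x : ℕ) (p q : Event × Event) : Prop :=
  p.2 = q.2 ∧ (p.1, q.1) ∈ edgesOf T x

/-!
Every edge constraint `g ≺ e` of `E(x)` is a PWR edge, and PWR only goes forward in the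
trace; `Conc(x)` pairs go forward too, because a pair `(g, f)` is recorded only when `g` was
processed before `f`. Hence a second-pass step strictly increases the trace position of the
first component: this gives the position invariant, termination and non-repetition at once.
For completeness, take a concurrent pair `(g, f)` with `g` before `f`. When the first pass
reaches `f`, either `g` is still in `RW(x)`, and `(g, f)` is put into `Conc(x)`, or `g` was
evicted by a later access `h` with `g ≺ h`; then `(h, f)` is again concurrent, with `h`
strictly closer to `f`, and `AllConc` steps back from `(h, f)` to `(g, f)`.
-/

lemma tracePos_lt_tracePos_iff_mem {T A B : List Event} {f g : Event} (hN : T.Nodup)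
    (hs : T = A ++ f :: B) : tracePos T g < tracePos T f ↔ g ∈ A := by
  subst hs
  have hf : f ∉ A := (List.nodup_middle.1 hN).notMem ∘ List.mem_append_left B
  have hpos_f : tracePos (A ++ f :: B) f = A.length := by
    simp [tracePos, List.idxOf_append_of_notMem hf]
  rw [hpos_f]
  by_cases hg : g ∈ A
  · simpa [tracePos, List.idxOf_append_of_mem hg, hg] using List.idxOf_lt_length_of_mem hg
  · simp [tracePos, List.idxOf_append_of_notMem hg, hg]

lemma IsCS.tracePos_release_lt {T : List Event} {y : ℕ} {a rl a' : Event} (h : IsCS T y a rl)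
    (ha' : a' ∈ T) (hop : a'.op = Op.acquire y) (hlt : tracePos T a < tracePos T a') :
    tracePos T rl < tracePos T a' := by
  obtain ⟨-, hrl, -, hrlop, -, -, hexcl⟩ := h
  have hle : tracePos T rl ≤ tracePos T a' := by
    by_contra! hgt
    exact hexcl a' ha' (Or.inl hop) ⟨hlt, hgt⟩
  refine lt_of_le_of_ne hle fun heq => ?_
  have : rl = a' := (List.idxOf_inj hrl).1 heq
  simp [← this, hrlop] at hop

theorem PWR.tracePos_lt {T : List Event} {e f : Event} (h : PWR T e f) :
    tracePos T e < tracePos T f := by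
  induction h with
  | po _ _ _ hlt => exact hlt
  | wrd h => exact h.2.2.choose_spec.2.2.1
  | @rod y a rl a' rl' e f he hf hne _ ih =>
    obtain ⟨hcs, -, -, hae, -⟩ := he
    obtain ⟨hcs', -, -, haf', hfrl'⟩ := hf
    rcases lt_trichotomy (tracePos T a) (tracePos T a') with hlt | heq | hgt
    · exact (hcs.tracePos_release_lt hcs'.1 hcs'.2.2.1 hlt).trans_le haf'
    · exact absurd ((List.idxOf_inj hcs.1).1 heq) hne
    -- the critical section of `f` would close before `e`, hence before `f`
    · have := hcs'.tracePos_release_lt hcs.1 hcs.2.2.1 hgt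
      omega
  | trans _ _ ih₁ ih₂ => exact ih₁.trans ih₂

section FirstPass

variable {T : List Event} {x : ℕ}

lemma stepRW_of_accesses (st : List Event × List (Event × Event) × List (Event × Event))
    {f : Event} (hf : f.accesses x) :
    stepRW T x st f =
      (f :: st.1.filter (fun g => !decide (PWR T g f)),
       st.2.1 ++ (st.1.filter (fun g => decide (PWR T g f))).map (fun g => (g, f)),
       st.2.2 ++ (st.1.filter
         (fun g => !decide (PWR T g f) && !decide (PWR T f g))).map (fun g => (g, f))) :=
  if_pos hf

lemma stepRW_of_not_accesses (st : List Event × List (Event × Event) × List (Event × Event))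
    {f : Event} (hf : ¬ f.accesses x) : stepRW T x st f = st :=
  if_neg hf

/-- Invariant of the state `(RW(x), E(x), Conc(x))` once the first pass has processed the
prefix `A` of `T`. -/
structure FirstPassInv (T : List Event) (x : ℕ) (A : List Event)
    (st : List Event × List (Event × Event) × List (Event × Event)) : Prop where
  rw_mem : ∀ g ∈ st.1, g ∈ A
  edge : ∀ p ∈ st.2.1, p.2 ∈ A ∧ p.2.accesses x ∧ PWR T p.1 p.2
  conc : ∀ p ∈ st.2.2, ¬ PWR T p.1 p.2 ∧ ¬ PWR T p.2 p.1 ∧ tracePos T p.1 < tracePos T p.2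
  covered : ∀ g ∈ A, g.accesses x → g ∈ st.1 ∨ ∃ h, (g, h) ∈ st.2.1

lemma FirstPassInv.stepRW {A B : List Event} {f : Event}
    {st : List Event × List (Event × Event) × List (Event × Event)}
    (hN : T.Nodup) (hs : T = A ++ f :: B) (hI : FirstPassInv T x A st) :
    FirstPassInv T x (A ++ [f]) (stepRW T x st f) := by
  obtain ⟨I_rw, I_edge, I_conc, I_cov⟩ := hI
  by_cases hf : f.accesses x
  · rw [stepRW_of_accesses st hf]
    refine ⟨?_, ?_, ?_, ?_⟩
    · simp only [List.mem_cons, List.mem_filter]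
      rintro g (rfl | ⟨hg, -⟩)
      · simp
      · simp [I_rw g hg]
    · simp only [List.mem_append, List.mem_map, List.mem_filter, decide_eq_true_eq]
      rintro p (hp | ⟨g, ⟨-, hgf⟩, rfl⟩)
      · exact ⟨Or.inl (I_edge p hp).1, (I_edge p hp).2⟩
      · exact ⟨by simp, hf, hgf⟩
    · simp only [List.mem_append, List.mem_map, List.mem_filter, Bool.and_eq_true,
        Bool.not_eq_true', decide_eq_false_iff_not]
      rintro p (hp | ⟨g, ⟨hg, hgf, hfg⟩, rfl⟩)
      · exact I_conc p hp
      · exact ⟨hgf, hfg, (tracePos_lt_tracePos_iff_mem hN hs).2 (I_rw g hg)⟩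
    · intro g hg hgx
      rcases List.mem_append.1 hg with hg | hg
      · rcases I_cov g hg hgx with hrw | ⟨h, hgh⟩
        · by_cases hgf : PWR T g f
          · exact Or.inr ⟨f, by simp [hrw, hgf]⟩
          · exact Or.inl (by simp [hrw, hgf])
        · exact Or.inr ⟨h, List.mem_append_left _ hgh⟩
      · exact Or.inl (by simp_all)
  · rw [stepRW_of_not_accesses st hf]
    refine ⟨fun g hg => by simp [I_rw g hg],
      fun p hp => ⟨List.mem_append_left _ (I_edge p hp).1, (I_edge p hp).2⟩, I_conc, ?_⟩
    intro g hg hgx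
    rcases List.mem_append.1 hg with hg | hg
    · exact I_cov g hg hgx
    · rw [List.mem_singleton.1 hg] at hgx
      exact absurd hgx hf

lemma firstPassInv_foldl (hN : T.Nodup) (A B : List Event) (hs : T = A ++ B) :
    FirstPassInv T x A (A.foldl (stepRW T x) ([], [], [])) := by
  induction A using List.reverseRecOn generalizing B with
  | nil => exact ⟨by simp, by simp, by simp, by simp⟩
  | append_singleton A f ih =>
    rw [List.foldl_concat]
    exact (ih (f :: B) (by simpa using hs)).stepRW hN (by simpa using hs)

lemma firstPassInv_firstPass (hN : T.Nodup) : FirstPassInv T x T (firstPass T x) :=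
  firstPassInv_foldl hN T [] (by simp)

lemma foldl_stepRW_subset (l : List Event)
    (st : List Event × List (Event × Event) × List (Event × Event)) :
    st.2.1 ⊆ (l.foldl (stepRW T x) st).2.1 ∧ st.2.2 ⊆ (l.foldl (stepRW T x) st).2.2 := by
  induction l generalizing st with
  | nil => simp
  | cons f l ih =>
    have hstep : st.2.1 ⊆ (stepRW T x st f).2.1 ∧ st.2.2 ⊆ (stepRW T x st f).2.2 := by
      by_cases hf : f.accesses x
      · simp [stepRW_of_accesses st hf]
      · simp [stepRW_of_not_accesses st hf]
    exact ⟨List.Subset.trans hstep.1 (ih _).1, List.Subset.trans hstep.2 (ih _).2⟩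

theorem AllConc.of_concurrent {A B : List Event} {f : Event} (hN : T.Nodup)
    (hs : T = A ++ f :: B) (hf : f.accesses x) {g : Event} (hg : g ∈ A) (hgx : g.accesses x)
    (hgf : ¬ PWR T g f) (hfg : ¬ PWR T f g) : AllConc T x g f := by
  set st := A.foldl (stepRW T x) ([], [], [])
  have hI : FirstPassInv T x A st := firstPassInv_foldl hN A (f :: B) hs
  have hfinal : firstPass T x = B.foldl (stepRW T x) (stepRW T x st f) := by
    rw [firstPass, congrArg (List.foldl (stepRW T x) _) hs, List.foldl_append, List.foldl_cons]
  have hsub := foldl_stepRW_subset (T := T) (x := x) B (stepRW T x st f)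
  rw [← hfinal] at hsub
  rcases hI.covered g hg hgx with hrw | ⟨h, hgh⟩
  · refine AllConc.base (hsub.2 ?_)
    simp [stepRW_of_accesses st hf, hrw, hgf, hfg]
  · obtain ⟨hh, hhx, hgh_pwr⟩ : h ∈ A ∧ h.accesses x ∧ PWR T g h := hI.edge _ hgh
    have hhf : tracePos T h < tracePos T f := (tracePos_lt_tracePos_iff_mem hN hs).2 hh
    have hgh_lt : tracePos T g < tracePos T h := hgh_pwr.tracePos_lt
    have hedge : (g, h) ∈ edgesOf T x := hsub.1 (by simp [stepRW_of_accesses st hf, hgh])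
    exact (of_concurrent hN hs hf hh hhx (fun hhf' => hgf (hgh_pwr.trans hhf'))
      (fun hfh => absurd hfh.tracePos_lt (by omega))).step hedge
termination_by tracePos T f - tracePos T g

end FirstPass

/-- Termination and non-repetition of the second pass, together with its
completeness: all processed pairs have increasing positions, the step relation
is well-founded (termination), no pair is ever re-processed, and every
PWR-concurrent conflicting pair ends up in `AllConc(x)`. -/
theorem stmt16 (T : List Event) (x : ℕ) (hT : WellFormed T) :
    (∀ e f, AllConc T x e f → tracePos T e < tracePos T f) ∧
    WellFounded (secondPassStep T x) ∧
    (∀ p : Event × Event, ¬ Relation.TransGen (secondPassStep T x) p p) ∧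
    (∀ e f, e ∈ T → f ∈ T → Conflict e f → e.accesses x → f.accesses x →
      tracePos T e < tracePos T f → ¬ PWR T e f → ¬ PWR T f e →
      AllConc T x e f) := by
  have hI := firstPassInv_firstPass (x := x) hT.1
  have edge_lt (p : Event × Event) (hp : p ∈ edgesOf T x) : tracePos T p.1 < tracePos T p.2 :=
    (hI.edge p hp).2.2.tracePos_lt
  have hwf : WellFounded (secondPassStep T x) :=
    Subrelation.wf (fun h => edge_lt _ h.2)
      (InvImage.wf (fun p : Event × Event => tracePos T p.1) wellFounded_lt)
  refine ⟨fun e f h => ?_, hwf, hwf.transGen.irrefl.irrefl, ?_⟩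
  · induction h with
    | base hp => exact (hI.conc _ hp).2.2
    | step _ hp ih => exact (edge_lt _ hp).trans ih
  · intro e f _ hf _ hex hfx hlt hef hfe
    obtain ⟨A, B, hs⟩ := List.append_of_mem hf
    exact AllConc.of_concurrent hT.1 hs hfx ((tracePos_lt_tracePos_iff_mem hT.1 hs).1 hlt)
      hex hef hfe
end
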